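/- Let G_d = exp(𝔤_d) be the adjoint group of 𝔤_d = 𝔰𝔩₂ ⊗ ℂ[z]/(z^{d+1}) acting on V_d = ℂ² ⊗ ℂ[z]/(z^{d+1}), and let e₁ be the first standard basis vector of ℂ². Then for each 0 ≤ n ≤ d+1, the G_d-orbit of e₁z^n equals {x ∈ V_d : min.deg x = n}. -/
import Mathlib

open Polynomial

noncomputable abbrev Rtc (d : ℕ) := Polynomial ℂ ⧸ Ideal.span {(X : Polynomial ℂ) ^ (d + 1)}

noncomputable def zz (d : ℕ) : Rtc d := Ideal.Quotient.mk _ X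

/-- `min.deg x = n` (with `min.deg 0 = d+1`). -/
def MinDegEq (d n : ℕ) (x : Fin 2 → Rtc d) : Prop :=
  (∃ y, x = (zz d) ^ n • y) ∧ (n = d + 1 ∨ ¬∃ y, x = (zz d) ^ (n + 1) • y)

/-- `e₁ z^n ∈ V_d`. -/
noncomputable def e1zn (d n : ℕ) : Fin 2 → Rtc d :=
  fun i => if i = 0 then (zz d) ^ n else 0

namespace Stmt6Aux

noncomputable def eps (d : ℕ) : Rtc d →+* ℂ :=
  Ideal.Quotient.lift _ (evalRingHom 0) (by
    intro p hp
    rw [Ideal.mem_span_singleton] at hp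
    obtain ⟨q, rfl⟩ := hp
    simp)

lemma eps_mk (d : ℕ) (p : Polynomial ℂ) :
    eps d (Ideal.Quotient.mk _ p) = p.coeff 0 := by
  simp [eps, coeff_zero_eq_eval_zero]

lemma eps_zz (d : ℕ) : eps d (zz d) = 0 := by
  simp [zz, eps_mk]

lemma zz_pow_ne_zero (d n : ℕ) (hn : n ≤ d) : (zz d) ^ n ≠ 0 := by
  rw [zz, ← map_pow, Ne, Ideal.Quotient.eq_zero_iff_mem, Ideal.mem_span_singleton]
  intro h
  have h2 := X_pow_dvd_iff.mp h n (by omega)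
  simp [coeff_X_pow] at h2

lemma zz_pow_top (d : ℕ) : (zz d) ^ (d + 1) = 0 := by
  rw [zz, ← map_pow, Ideal.Quotient.eq_zero_iff_mem]
  exact Ideal.subset_span rfl

lemma eps_eq_zero_iff (d : ℕ) (a : Rtc d) : eps d a = 0 ↔ ∃ r, a = zz d * r := by
  obtain ⟨p, rfl⟩ := Ideal.Quotient.mk_surjective a
  constructor
  · intro h
    rw [eps_mk] at h
    obtain ⟨q, rfl⟩ := X_dvd_iff.mpr h
    exact ⟨Ideal.Quotient.mk _ q, by rw [zz, ← map_mul]⟩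
  · rintro ⟨r, hr⟩
    rw [hr, map_mul, eps_zz, zero_mul]

lemma nilpotent_of_eps_zero (d : ℕ) (a : Rtc d) (h : eps d a = 0) : IsNilpotent a := by
  obtain ⟨r, rfl⟩ := (eps_eq_zero_iff d a).mp h
  exact ⟨d + 1, by rw [mul_pow, zz_pow_top, zero_mul]⟩

lemma isUnit_of_eps_ne (d : ℕ) (a : Rtc d) (h : eps d a ≠ 0) : IsUnit a := by
  have hc : IsUnit ((algebraMap ℂ (Rtc d)) (eps d a)) :=
    (isUnit_iff_ne_zero.mpr h).map _
  have hnil : IsNilpotent (a - (algebraMap ℂ (Rtc d)) (eps d a)) := by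
    apply nilpotent_of_eps_zero
    rw [map_sub]
    have : eps d ((algebraMap ℂ (Rtc d)) (eps d a)) = eps d a := by
      obtain ⟨p, rfl⟩ := Ideal.Quotient.mk_surjective a
      rw [eps_mk]
      have : (algebraMap ℂ (Rtc d)) (p.coeff 0)
          = Ideal.Quotient.mk _ (C (p.coeff 0)) := rfl
      rw [this, eps_mk, coeff_C_zero]
    rw [this, sub_self]
  have := IsNilpotent.isUnit_add_right_of_commute hnil hc (Commute.all _ _)
  simpa using this

lemma zz_mul_nilpotent (d : ℕ) (w : Rtc d) : IsNilpotent (zz d * w) :=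
  nilpotent_of_eps_zero d _ (by rw [map_mul, eps_zz, zero_mul])

/-- Key cancellation lemma. -/
lemma key (d n : ℕ) (hn : n ≤ d) (u w : Rtc d) (hu : IsUnit u)
    (h : (zz d) ^ n * u = (zz d) ^ (n + 1) * w) : False := by
  have h1 : (zz d) ^ n * (u - zz d * w) = 0 := by
    linear_combination h
  have h2 : IsUnit (u - zz d * w) := by
    have := IsNilpotent.isUnit_add_right_of_commute
      ((zz_mul_nilpotent d w).neg) hu (Commute.all _ _)
    simpa [neg_add_eq_sub] using this
  obtain ⟨v, hv⟩ := h2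
  apply zz_pow_ne_zero d n hn
  calc (zz d) ^ n = (zz d) ^ n * (↑v * ↑v⁻¹) := by rw [Units.mul_inv, mul_one]
    _ = ((zz d) ^ n * (u - zz d * w)) * ↑v⁻¹ := by rw [hv]; ring
    _ = 0 := by rw [h1, zero_mul]

lemma mulVec_e1zn (d n : ℕ) (g : Matrix (Fin 2) (Fin 2) (Rtc d)) :
    g.mulVec (e1zn d n) = (zz d) ^ n • (fun i => g i 0) := by
  funext i
  simp [Matrix.mulVec, dotProduct, Fin.sum_univ_two, e1zn, mul_comm]

end Stmt6Aux

open Stmt6Aux in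
/-- the orbit of `e₁z^n` under the adjoint group
`G_d = SL₂(ℂ[z]/(z^{d+1}))` acting on `V_d = ℂ² ⊗ ℂ[z]/(z^{d+1})` equals
`{x ∈ V_d : min.deg x = n}`, for every `0 ≤ n ≤ d+1`. -/
theorem stmt6 (d n : ℕ) (hn : n ≤ d + 1) (x : Fin 2 → Rtc d) :
    (∃ g : Matrix.SpecialLinearGroup (Fin 2) (Rtc d),
      (g : Matrix (Fin 2) (Fin 2) (Rtc d)).mulVec (e1zn d n) = x) ↔ MinDegEq d n x := by
  constructor
  · rintro ⟨g, rfl⟩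
    rw [mulVec_e1zn]
    refine ⟨⟨_, rfl⟩, ?_⟩
    rcases eq_or_lt_of_le hn with h | h
    · exact Or.inl h
    · right
      rintro ⟨y', hy'⟩
      have hdet : (g : Matrix (Fin 2) (Fin 2) (Rtc d)).det = 1 := g.2
      rw [Matrix.det_fin_two] at hdet
      have hdet' : eps d (g.1 0 0) * eps d (g.1 1 1)
          - eps d (g.1 0 1) * eps d (g.1 1 0) = 1 := by
        rw [← map_mul, ← map_mul, ← map_sub, hdet, map_one]
      have hex : ∃ i : Fin 2, eps d (g.1 i 0) ≠ 0 := by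
        by_contra hc
        push_neg at hc
        rw [hc 0, hc 1] at hdet'
        simp at hdet'
      obtain ⟨i, hi⟩ := hex
      have hu : IsUnit (g.1 i 0) := isUnit_of_eps_ne d _ hi
      have heq : (zz d) ^ n * g.1 i 0 = (zz d) ^ (n + 1) * y' i := by
        have := congrFun hy' i
        simpa [Pi.smul_apply, smul_eq_mul] using this
      exact key d n (by omega) _ _ hu heq
  · rintro ⟨⟨y, rfl⟩, hsec⟩
    rcases eq_or_lt_of_le hn with h | h
    · -- n = d + 1 : x = 0
      subst h
      refine ⟨1, ?_⟩
      rw [mulVec_e1zn]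
      funext i
      simp [zz_pow_top, Matrix.one_apply]
    · have hnd : n ≤ d := by omega
      have hsec' : ¬∃ y', (zz d) ^ n • y = (zz d) ^ (n + 1) • y' := by
        rcases hsec with h' | h'
        · omega
        · exact h'
      have hex : ∃ i : Fin 2, IsUnit (y i) := by
        by_contra hc
        push_neg at hc
        have h0 : ∀ i : Fin 2, ∃ r, y i = zz d * r := by
          intro i
          apply (eps_eq_zero_iff d _).mp
          by_contra he
          exact hc i (isUnit_of_eps_ne d _ he)
        obtain ⟨r0, hr0⟩ := h0 0
        obtain ⟨r1, hr1⟩ := h0 1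
        apply hsec'
        refine ⟨![r0, r1], ?_⟩
        funext i
        fin_cases i <;>
          simp [Pi.smul_apply, smul_eq_mul, hr0, hr1, pow_succ] <;> ring
      obtain ⟨i, hi⟩ := hex
      obtain ⟨u, hu⟩ := hi
      fin_cases i
      · refine ⟨⟨!![y 0, 0; y 1, ↑u⁻¹], ?_⟩, ?_⟩
        · rw [Matrix.det_fin_two_of, show (y 0 : Rtc d) = ↑u from hu.symm]
          simp [Units.mul_inv]
        · rw [mulVec_e1zn]
          funext j
          fin_cases j <;> simp
      · refine ⟨⟨!![y 0, -↑u⁻¹; y 1, 0], ?_⟩, ?_⟩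
        · rw [Matrix.det_fin_two_of, show (y 1 : Rtc d) = ↑u from hu.symm]
          have h3 : (↑u⁻¹ * ↑u : Rtc d) = 1 := u.inv_mul
          linear_combination h3
        · rw [mulVec_e1zn]
          funext j
          fin_cases j <;> simp
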